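/- If a vertex occurrence of graph-vertex u at level k of the uniqueness tree T(v) is unique and vertex w is a neighbor of u in G, then w appears at level k+1 of T(v); consequently, every vertex of G appearing at some level of T(v) lies in the connected component of v. -/

import Mathlib

namespace UT

variable {V : Type*} [Fintype V] [DecidableEq V]

/-- The multiset of graph-vertex labels occurring at level `k` of the uniqueness tree of `v`:
level 0 is `{v}`; each unique occurrence (a vertex appearing exactly once at its level)
spawns one child per graph-neighbor, and non-unique occurrences spawn none. -/
def uLevel (G : SimpleGraph V) [DecidableRel G.Adj] (v : V) : ℕ → Multiset V
  | 0 => {v}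
  | k + 1 =>
      ((uLevel G v k).filter fun u => (uLevel G v k).count u = 1).bind
        fun u => (G.neighborFinset u).val

end UT

namespace UT

variable {V : Type*} [Fintype V] [DecidableEq V] (G : SimpleGraph V) [DecidableRel G.Adj] (v : V)

@[simp]
theorem mem_uLevel_zero {u : V} : u ∈ uLevel G v 0 ↔ u = v :=
  Multiset.mem_singleton

@[simp]
theorem mem_uLevel_succ {k : ℕ} {w : V} :
    w ∈ uLevel G v (k + 1) ↔ ∃ u, (uLevel G v k).count u = 1 ∧ G.Adj u w := by
  simp only [uLevel, Multiset.mem_bind, Multiset.mem_filter, Finset.mem_val,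
    SimpleGraph.mem_neighborFinset]
  constructor
  · rintro ⟨u, ⟨-, hu⟩, huw⟩
    exact ⟨u, hu, huw⟩
  · rintro ⟨u, hu, huw⟩
    exact ⟨u, ⟨Multiset.count_pos.mp (by omega), hu⟩, huw⟩

theorem reachable_of_mem_uLevel {k : ℕ} {u : V} (hu : u ∈ uLevel G v k) : G.Reachable v u := by
  induction k generalizing u with
  | zero =>
    obtain rfl := (mem_uLevel_zero G v).mp hu
    rfl
  | succ k ih =>
    obtain ⟨a, ha, hau⟩ := (mem_uLevel_succ G v).mp hu
    exact (ih (Multiset.count_pos.mp (by omega))).trans hau.reachable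

end UT

/-- If an occurrence of `u` at level `k` of the uniqueness tree of `v` is unique and `w` is a
neighbor of `u`, then `w` appears at level `k + 1`; consequently every vertex appearing at
some level of the tree lies in the connected component of `v`. -/
theorem uLevel_child_and_reachable {V : Type*} [Fintype V] [DecidableEq V]
    (G : SimpleGraph V) [DecidableRel G.Adj] (v : V) :
    (∀ (k : ℕ) (u w : V), (UT.uLevel G v k).count u = 1 → G.Adj u w →
        w ∈ UT.uLevel G v (k + 1)) ∧
      ∀ (k : ℕ) (u : V), u ∈ UT.uLevel G v k → G.Reachable v u :=
  ⟨fun _ u _ hu huw => (UT.mem_uLevel_succ G v).mpr ⟨u, hu, huw⟩,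
    fun _ _ => UT.reachable_of_mem_uLevel G v⟩
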